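/- arXiv:math/0702249 — 2 statements merged into one kernel-verified Lean document; each statement's English description precedes it below -/
import Mathlib

section
/- For all x ≥ 0, the function f(x) = N(x/2) + e^{3x²}(1 - N(5x/2)), where N is the standard normal CDF, satisfies f(x) ≥ N(1/√5) + (1/12)·√(10/π)·e^{-1/10}. -/
open Real MeasureTheory Set Filter Topology


/-- The standard normal cumulative distribution function. -/
noncomputable def stdNormalCDF (x : ℝ) : ℝ :=
  (Real.sqrt (2 * Real.pi))⁻¹ * ∫ v in Set.Iic x, Real.exp (-v ^ 2 / 2)

lemma gauss_integrable : Integrable (fun v : ℝ => Real.exp (-v ^ 2 / 2)) := by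
  have h := integrable_exp_neg_mul_sq (by norm_num : (0:ℝ) < 1/2)
  convert h using 2 with v
  ring_nf

lemma gauss_total : ∫ v : ℝ, Real.exp (-v ^ 2 / 2) = Real.sqrt (2 * π) := by
  have h := integral_gaussian (1/2)
  rw [show π / (1/2) = 2 * π by ring] at h
  rw [← h]; congr 1 with v; ring_nf

lemma cdf_diff (a b : ℝ) :
    stdNormalCDF b - stdNormalCDF a
      = (Real.sqrt (2 * π))⁻¹ * ∫ v in a..b, Real.exp (-v ^ 2 / 2) := by
  unfold stdNormalCDF
  rw [← mul_sub]
  congr 1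
  exact intervalIntegral.integral_Iic_sub_Iic gauss_integrable.integrableOn
    gauss_integrable.integrableOn

lemma cdf_tail (t : ℝ) :
    1 - stdNormalCDF t
      = (Real.sqrt (2 * π))⁻¹ * ∫ v in Set.Ioi t, Real.exp (-v ^ 2 / 2) := by
  unfold stdNormalCDF
  have h := intervalIntegral.integral_Iic_add_Ioi (b := t)
    gauss_integrable.integrableOn (f := fun v : ℝ => Real.exp (-v ^ 2 / 2))
    gauss_integrable.integrableOn
  have hG : Real.sqrt (2 * π) > 0 := Real.sqrt_pos.2 (by positivity)
  rw [gauss_total] at h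
  have hG : (0:ℝ) < Real.sqrt (2 * π) := Real.sqrt_pos.2 (by positivity)
  have h2 : (∫ v in Set.Ioi t, Real.exp (-v ^ 2 / 2))
      = Real.sqrt (2 * π) - ∫ v in Set.Iic t, Real.exp (-v ^ 2 / 2) := by
    linarith
  rw [h2, mul_sub, inv_mul_cancel₀ hG.ne']

lemma gauss_to_zero : Tendsto (fun v : ℝ => Real.exp (-v ^ 2 / 2)) atTop (𝓝 0) := by
  apply Real.tendsto_exp_atBot.comp
  have h1 : Tendsto (fun v : ℝ => v ^ 2) atTop atTop := tendsto_pow_atTop two_ne_zero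
  have h2 : Tendsto (fun v : ℝ => v ^ 2 / 2) atTop atTop := h1.atTop_div_const (by norm_num)
  have h3 := tendsto_neg_atTop_atBot.comp h2
  refine h3.congr fun v => ?_
  simp [Function.comp]
  ring

lemma tail_lb2 (t : ℝ) (ht : 0 ≤ t) :
    Real.exp (-t ^ 2 / 2) * ((t ^ 3 + 5 * t) / (t ^ 4 + 6 * t ^ 2 + 3))
      ≤ ∫ v in Set.Ioi t, Real.exp (-v ^ 2 / 2) := by
  set f : ℝ → ℝ := fun v => -(Real.exp (-v ^ 2 / 2) * ((v ^ 3 + 5 * v) / (v ^ 4 + 6 * v ^ 2 + 3)))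
    with hf
  set f' : ℝ → ℝ := fun v =>
    Real.exp (-v ^ 2 / 2) * (((v ^ 4 + 6 * v ^ 2 + 3) ^ 2 - 24) / (v ^ 4 + 6 * v ^ 2 + 3) ^ 2)
    with hf'
  have hq : ∀ v : ℝ, (0:ℝ) < v ^ 4 + 6 * v ^ 2 + 3 := fun v => by positivity
  have hq3 : ∀ v : ℝ, (3:ℝ) ≤ v ^ 4 + 6 * v ^ 2 + 3 := fun v => by nlinarith [sq_nonneg v, sq_nonneg (v^2)]
  have hq9 : ∀ v : ℝ, (9:ℝ) ≤ (v ^ 4 + 6 * v ^ 2 + 3) ^ 2 := fun v => by nlinarith [hq3 v, hq v]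
  have hderiv : ∀ v ∈ Ici t, HasDerivAt f (f' v) v := by
    intro v _
    have h1 : HasDerivAt (fun v : ℝ => -v ^ 2 / 2) (-v) v := by
      have := ((hasDerivAt_pow 2 v).div_const 2).neg
      convert! this using 1
      · funext x; simp only [Pi.neg_apply]; ring
      · norm_num
    have h2 := h1.exp
    have h3 : HasDerivAt (fun v : ℝ => v ^ 3 + 5 * v) (3 * v ^ 2 + 5) v := by
      have := (hasDerivAt_pow 3 v).add ((hasDerivAt_id v).const_mul 5)
      convert! this using 1 <;> ring
    have h4 : HasDerivAt (fun v : ℝ => v ^ 4 + 6 * v ^ 2 + 3) (4 * v ^ 3 + 12 * v) v := by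
      have := ((hasDerivAt_pow 4 v).add ((hasDerivAt_pow 2 v).const_mul 6)).add_const 3
      convert! this using 1 <;> ring
    have h5 := h3.div h4 (hq v).ne'
    have h6 := (h2.mul h5).neg
    convert! h6 using 1
    rw [hf']
    have hqv := (hq v).ne'
    simp only [Pi.div_apply]
    field_simp
    ring
  have hbound : ∀ v : ℝ, ‖f' v‖ ≤ 5/3 * Real.exp (-v ^ 2 / 2) := by
    intro v
    have hqv := hq v
    have h9 := hq9 v
    have hd : ((v ^ 4 + 6 * v ^ 2 + 3) ^ 2 - 24) / (v ^ 4 + 6 * v ^ 2 + 3) ^ 2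
        = 1 - 24 / (v ^ 4 + 6 * v ^ 2 + 3) ^ 2 := by
      field_simp
    have h24 : (0:ℝ) < 24 / (v ^ 4 + 6 * v ^ 2 + 3) ^ 2 := by positivity
    have h24' : (24:ℝ) / (v ^ 4 + 6 * v ^ 2 + 3) ^ 2 ≤ 24 / 9 :=
      div_le_div_of_nonneg_left (by norm_num) (by norm_num) h9
    rw [hf']
    simp only []
    rw [hd, norm_mul, Real.norm_eq_abs, Real.norm_eq_abs, abs_of_pos (Real.exp_pos _),
      mul_comm (5/3 : ℝ) _]
    apply mul_le_mul_of_nonneg_left _ (Real.exp_pos _).le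
    rw [abs_le]
    constructor <;> linarith
  have hint : IntegrableOn f' (Ioi t) := by
    apply Integrable.integrableOn
    apply Integrable.mono (gauss_integrable.const_mul (5/3)) ?_ ?_
    · apply Continuous.aestronglyMeasurable
      apply Continuous.mul (by continuity)
      apply Continuous.div (by continuity) (by continuity)
      intro v
      exact pow_ne_zero _ (hq v).ne'
    · filter_upwards with v
      rw [Real.norm_eq_abs (5/3 * _), abs_of_pos (by positivity)]
      exact hbound v
  have htend : Tendsto f atTop (𝓝 0) := by
    rw [← neg_zero]
    apply Tendsto.neg
    apply tendsto_of_tendsto_of_tendsto_of_le_of_le'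
      (tendsto_const_nhds : Tendsto (fun _ : ℝ => (0:ℝ)) atTop (𝓝 0))
      (by simpa using gauss_to_zero.const_mul 6)
    · filter_upwards [eventually_ge_atTop (0:ℝ)] with v hv
      have h1 := (hq v).le
      have h2 : (0:ℝ) ≤ v ^ 3 + 5 * v := by nlinarith
      positivity
    · filter_upwards [eventually_ge_atTop (1:ℝ)] with v hv
      have hqv := hq v
      rw [show (6:ℝ) * Real.exp (-v ^ 2 / 2) = Real.exp (-v ^ 2 / 2) * 6 by ring]
      apply mul_le_mul_of_nonneg_left _ (Real.exp_pos _).le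
      rw [div_le_iff₀ hqv]
      nlinarith
  have key := MeasureTheory.integral_Ioi_of_hasDerivAt_of_tendsto'
    (fun v hv => hderiv v hv) hint htend
  have hmono : ∫ v in Set.Ioi t, f' v ≤ ∫ v in Set.Ioi t, Real.exp (-v ^ 2 / 2) := by
    apply setIntegral_mono_on hint gauss_integrable.integrableOn measurableSet_Ioi
    intro v _
    rw [hf']
    simp only []
    rw [mul_comm]
    apply mul_le_of_le_one_left (Real.exp_pos _).le
    rw [div_le_one (by positivity)]
    linarith [hq9 v]
  rw [key, hf] at hmono
  simp only [zero_sub, neg_neg] at hmono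
  exact hmono


lemma tail_lb1 (t : ℝ) (ht : 0 ≤ t) :
    Real.exp (-t ^ 2 / 2) * (8 / (t ^ 2 + 4 * t + 8))
      ≤ ∫ v in Set.Ioi t, Real.exp (-v ^ 2 / 2) := by
  set f : ℝ → ℝ := fun v => -(Real.exp (-v ^ 2 / 2) * (8 / (v ^ 2 + 4 * v + 8))) with hf
  set f' : ℝ → ℝ := fun v =>
    Real.exp (-v ^ 2 / 2) * ((8 * v ^ 3 + 32 * v ^ 2 + 80 * v + 32) / (v ^ 2 + 4 * v + 8) ^ 2)
    with hf'
  have hq : ∀ v : ℝ, (0:ℝ) < v ^ 2 + 4 * v + 8 := fun v => by nlinarith [sq_nonneg (v + 2)]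
  have hderiv : ∀ v ∈ Ici t, HasDerivAt f (f' v) v := by
    intro v _
    have h1 : HasDerivAt (fun v : ℝ => -v ^ 2 / 2) (-v) v := by
      have := ((hasDerivAt_pow 2 v).div_const 2).neg
      convert! this using 1
      · funext x; simp only [Pi.neg_apply]; ring
      · norm_num
    have h2 := h1.exp
    have h4 : HasDerivAt (fun v : ℝ => v ^ 2 + 4 * v + 8) (2 * v + 4) v := by
      have := ((hasDerivAt_pow 2 v).add ((hasDerivAt_id v).const_mul 4)).add_const 8
      convert! this using 1 <;> ring
    have h5 := (hasDerivAt_const v (8:ℝ)).div h4 (hq v).ne'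
    have h6 := (h2.mul h5).neg
    convert! h6 using 1
    rw [hf']
    have hqv := (hq v).ne'
    simp only [Pi.div_apply]
    field_simp
    ring
  have hptle : ∀ v : ℝ, 0 ≤ v → f' v ≤ Real.exp (-v ^ 2 / 2) := by
    intro v hv
    rw [hf']
    simp only []
    rw [mul_comm]
    apply mul_le_of_le_one_left (Real.exp_pos _).le
    rw [div_le_one (by positivity)]
    nlinarith [sq_nonneg (v ^ 2 - 4), sq_nonneg (v - 1), sq_nonneg v, hv]
  have hptge : ∀ v : ℝ, 0 ≤ v → 0 ≤ f' v := by
    intro v hv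
    rw [hf']
    have h1 : (0:ℝ) ≤ 8 * v ^ 3 + 32 * v ^ 2 + 80 * v + 32 := by positivity
    positivity
  have hint : IntegrableOn f' (Ioi t) := by
    apply Integrable.mono gauss_integrable.integrableOn
    · apply Continuous.aestronglyMeasurable
      have c1 : Continuous fun v : ℝ => Real.exp (-v ^ 2 / 2) :=
        Real.continuous_exp.comp (((continuous_pow 2).neg).div_const 2)
      have c2 : Continuous fun v : ℝ => (8 * v ^ 3 + 32 * v ^ 2 + 80 * v + 32) := by fun_prop
      have c3 : Continuous fun v : ℝ => ((v ^ 2 + 4 * v + 8) ^ 2) := by fun_prop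
      exact c1.mul (c2.div c3 (fun v => pow_ne_zero _ (hq v).ne'))
    · rw [ae_restrict_iff' measurableSet_Ioi]
      filter_upwards with v hv
      have hv0 : (0:ℝ) ≤ v := le_trans ht (le_of_lt hv)
      rw [Real.norm_eq_abs, Real.norm_eq_abs, abs_of_nonneg (hptge v hv0),
        abs_of_pos (Real.exp_pos _)]
      exact hptle v hv0
  have htend : Tendsto f atTop (𝓝 0) := by
    rw [← neg_zero]
    apply Tendsto.neg
    apply tendsto_of_tendsto_of_tendsto_of_le_of_le'
      (tendsto_const_nhds : Tendsto (fun _ : ℝ => (0:ℝ)) atTop (𝓝 0)) gauss_to_zero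
    · filter_upwards [eventually_ge_atTop (0:ℝ)] with v hv
      have h1 := (hq v).le
      positivity
    · filter_upwards [eventually_ge_atTop (0:ℝ)] with v hv
      rw [mul_comm]
      apply mul_le_of_le_one_left (Real.exp_pos _).le
      rw [div_le_one (hq v)]
      nlinarith
  have key := MeasureTheory.integral_Ioi_of_hasDerivAt_of_tendsto'
    (fun v hv => hderiv v hv) hint htend
  have hmono : ∫ v in Set.Ioi t, f' v ≤ ∫ v in Set.Ioi t, Real.exp (-v ^ 2 / 2) := by
    apply setIntegral_mono_on hint gauss_integrable.integrableOn measurableSet_Ioi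
    intro v hv
    exact hptle v (le_trans ht (le_of_lt hv))
  rw [key, hf] at hmono
  simp only [zero_sub, neg_neg] at hmono
  exact hmono


lemma exp_neg_series (y : ℝ) (h0 : 0 ≤ y) (h1 : y ≤ 1) :
    1 - y + y ^ 2 / 2 - y ^ 3 / 6 ≤ Real.exp (-y) ∧
      Real.exp (-y) ≤ 1 - y + y ^ 2 / 2 - y ^ 3 / 6 + 5 * y ^ 4 / 96 := by
  have hx : |(-y)| ≤ 1 := by rw [abs_neg, abs_of_nonneg h0]; exact h1
  have h := Real.exp_bound hx (by norm_num : 0 < 5)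
  have hs : ∑ m ∈ Finset.range 5, (-y) ^ m / (Nat.factorial m)
      = 1 - y + y ^ 2 / 2 - y ^ 3 / 6 + y ^ 4 / 24 := by
    simp [Finset.sum_range_succ, Nat.factorial]
    ring
  rw [hs, abs_neg, abs_of_nonneg h0] at h
  have h2 := abs_sub_le_iff.mp h
  norm_num [Nat.factorial] at h2
  obtain ⟨ha, hb⟩ := h2
  have hy5 : y ^ 5 ≤ y ^ 4 := pow_le_pow_of_le_one h0 h1 (by norm_num)
  constructor <;> nlinarith [pow_nonneg h0 4, pow_nonneg h0 5]



lemma J_poly_lb (u v : ℝ) (h0 : 0 ≤ u) (huv : u ≤ v) (hv : v ≤ 7/5) :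
    (v - v ^ 3 / 6 + v ^ 5 / 40 - v ^ 7 / 336) - (u - u ^ 3 / 6 + u ^ 5 / 40 - u ^ 7 / 336)
      ≤ ∫ w in u..v, Real.exp (-w ^ 2 / 2) := by
  have hAP : ∀ w : ℝ, HasDerivAt (fun w : ℝ => w - w ^ 3 / 6 + w ^ 5 / 40 - w ^ 7 / 336)
      (1 - w ^ 2 / 2 + w ^ 4 / 8 - w ^ 6 / 48) w := by
    intro w
    have h1 := hasDerivAt_id w
    have h3 := (hasDerivAt_pow 3 w).div_const 6
    have h5 := (hasDerivAt_pow 5 w).div_const 40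
    have h7 := (hasDerivAt_pow 7 w).div_const 336
    have := ((h1.sub h3).add h5).sub h7
    convert! this using 1
    push_cast
    ring
  have heq : ∫ w in u..v, (1 - w ^ 2 / 2 + w ^ 4 / 8 - w ^ 6 / 48)
      = (v - v ^ 3 / 6 + v ^ 5 / 40 - v ^ 7 / 336) - (u - u ^ 3 / 6 + u ^ 5 / 40 - u ^ 7 / 336) := by
    apply intervalIntegral.integral_eq_sub_of_hasDerivAt (fun w _ => hAP w)
    apply Continuous.intervalIntegrable
    fun_prop
  rw [← heq]
  apply intervalIntegral.integral_mono_on huv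
  · apply Continuous.intervalIntegrable; fun_prop
  · exact gauss_integrable.intervalIntegrable
  · intro w hw
    obtain ⟨hw0, hw1⟩ := hw
    have hy0 : (0:ℝ) ≤ w ^ 2 / 2 := by positivity
    have hy1 : w ^ 2 / 2 ≤ 1 := by nlinarith [le_trans huv hv, le_trans h0 hw0]
    have h := (exp_neg_series (w ^ 2 / 2) hy0 hy1).1
    rw [show -(w ^ 2) / 2 = -(w ^ 2 / 2) by ring]
    nlinarith [h]

lemma J_poly_ub (v : ℝ) (h0 : 0 ≤ v) (hv : v ≤ 7/5) :
    ∫ w in (0:ℝ)..v, Real.exp (-w ^ 2 / 2)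
      ≤ v - v ^ 3 / 6 + v ^ 5 / 40 - v ^ 7 / 336 + 5 * v ^ 9 / 13824 := by
  have hAQ : ∀ w : ℝ, HasDerivAt
      (fun w : ℝ => w - w ^ 3 / 6 + w ^ 5 / 40 - w ^ 7 / 336 + 5 * w ^ 9 / 13824)
      (1 - w ^ 2 / 2 + w ^ 4 / 8 - w ^ 6 / 48 + 5 * w ^ 8 / 1536) w := by
    intro w
    have h1 := hasDerivAt_id w
    have h3 := (hasDerivAt_pow 3 w).div_const 6
    have h5 := (hasDerivAt_pow 5 w).div_const 40
    have h7 := (hasDerivAt_pow 7 w).div_const 336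
    have h9 := ((hasDerivAt_pow 9 w).const_mul (5:ℝ)).div_const 13824
    have := (((h1.sub h3).add h5).sub h7).add h9
    convert! this using 1
    push_cast
    ring
  have heq : ∫ w in (0:ℝ)..v, (1 - w ^ 2 / 2 + w ^ 4 / 8 - w ^ 6 / 48 + 5 * w ^ 8 / 1536)
      = v - v ^ 3 / 6 + v ^ 5 / 40 - v ^ 7 / 336 + 5 * v ^ 9 / 13824 := by
    rw [intervalIntegral.integral_eq_sub_of_hasDerivAt (fun w _ => hAQ w)]
    · norm_num
    · apply Continuous.intervalIntegrable; fun_prop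
  rw [← heq]
  apply intervalIntegral.integral_mono_on h0
  · exact gauss_integrable.intervalIntegrable
  · apply Continuous.intervalIntegrable; fun_prop
  · intro w hw
    obtain ⟨hw0, hw1⟩ := hw
    have hy0 : (0:ℝ) ≤ w ^ 2 / 2 := by positivity
    have hy1 : w ^ 2 / 2 ≤ 1 := by nlinarith [le_trans hw1 hv]
    have h := (exp_neg_series (w ^ 2 / 2) hy0 hy1).2
    rw [show -(w ^ 2) / 2 = -(w ^ 2 / 2) by ring]
    nlinarith [h]


lemma claimC : (76996/100000 : ℝ) ≤ (37/40) - (37/40) ^ 3 / 6 + (37/40) ^ 5 / 40 - (37/40) ^ 7 / 336 := by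
  norm_num

lemma claimA (s : ℝ) (h0 : 0 ≤ s) (h1 : s ≤ 1/5) :
    0 ≤ ((s - s ^ 3 / 6 + s ^ 5 / 40 - s ^ 7 / 336) - 76996/100000) * (25 * s ^ 2 + 20 * s + 8)
        + 8 * (1 - s ^ 2 / 2 + s ^ 4 / 8 - s ^ 6 / 48) := by
  nlinarith [mul_nonneg h0 (sub_nonneg.2 h1), sq_nonneg s, pow_nonneg h0 3, pow_nonneg h0 4,
    pow_nonneg h0 5, pow_nonneg h0 6, pow_nonneg h0 7, pow_nonneg h0 8, pow_nonneg h0 9,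
    mul_nonneg (mul_nonneg h0 h0) (sub_nonneg.2 h1), sq_nonneg (s - 1/5)]



lemma claimB (s : ℝ) (h0 : 1/5 ≤ s) (h1 : s ≤ 37/40) :
    0 ≤ ((s - s ^ 3 / 6 + s ^ 5 / 40 - s ^ 7 / 336) - 76996/100000)
          * (625 * s ^ 4 + 150 * s ^ 2 + 3)
        + (1 - s ^ 2 / 2 + s ^ 4 / 8 - s ^ 6 / 48) * (125 * s ^ 3 + 25 * s) := by
  rcases le_or_gt s (9/16) with h2 | h2
  · have hA : (0:ℝ) ≤ s - (1/5) := by linarith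
    have hB : (0:ℝ) ≤ (9/16) - s := by linarith
    have T : ∀ i j : ℕ, (0:ℝ) ≤ (s - (1/5))^i * ((9/16) - s)^j :=
      fun i j => mul_nonneg (pow_nonneg hA i) (pow_nonneg hB j)
    have e : ((s - s ^ 3 / 6 + s ^ 5 / 40 - s ^ 7 / 336) - 76996/100000)
          * (625 * s ^ 4 + 150 * s ^ 2 + 3)
        + (1 - s ^ 2 / 2 + s ^ 4 / 8 - s ^ 6 / 48) * (125 * s ^ 3 + 25 * s) = (1012210404530585600000/85403568359940803 : ℝ) * ((s - (1/5))^0 * ((9/16) - s)^11) + (47336847448588943360000/256210705079822409 : ℝ) * ((s - (1/5))^1 * ((9/16) - s)^10) + (232634622962890178560000/256210705079822409 : ℝ) * ((s - (1/5))^2 * ((9/16) - s)^9) + (180239983925641871360000/85403568359940803 : ℝ) * ((s - (1/5))^3 * ((9/16) - s)^8) + (213495451717719818240000/85403568359940803 : ℝ) * ((s - (1/5))^4 * ((9/16) - s)^7) + (19046670242978201600000/12200509765705829 : ℝ) * ((s - (1/5))^5 * ((9/16) - s)^6) + (20925194615895244800000/12200509765705829 : ℝ) * ((s - (1/5))^6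 * ((9/16) - s)^5) + (378790356242704512000000/85403568359940803 : ℝ) * ((s - (1/5))^7 * ((9/16) - s)^4) + (550755841646521744000000/85403568359940803 : ℝ) * ((s - (1/5))^8 * ((9/16) - s)^3) + (418313420027938943500000/85403568359940803 : ℝ) * ((s - (1/5))^9 * ((9/16) - s)^2) + (163301132153024366359375/85403568359940803 : ℝ) * ((s - (1/5))^10 * ((9/16) - s)^1) + (418181002344959901515625/1366457093759052848 : ℝ) * ((s - (1/5))^11 * ((9/16) - s)^0) := by ring
    rw [e]
    have := T 0 11; have := T 1 10; have := T 2 9; have := T 3 8; have := T 4 7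
    have := T 5 6; have := T 6 5; have := T 7 4; have := T 8 3; have := T 9 2
    have := T 10 1; have := T 11 0
    linarith
  · have hA : (0:ℝ) ≤ s - (9/16) := by linarith
    have hB : (0:ℝ) ≤ (37/40) - s := by linarith
    have T : ∀ i j : ℕ, (0:ℝ) ≤ (s - (9/16))^i * ((37/40) - s)^j :=
      fun i j => mul_nonneg (pow_nonneg hA i) (pow_nonneg hB j)
    have e : ((s - s ^ 3 / 6 + s ^ 5 / 40 - s ^ 7 / 336) - 76996/100000)
          * (625 * s ^ 4 + 150 * s ^ 2 + 3)
        + (1 - s ^ 2 / 2 + s ^ 4 / 8 - s ^ 6 / 48) * (125 * s ^ 3 + 25 * s) = (418181002344959901515625/1366457093759052848 : ℝ) * ((s - (9/16))^0 * ((37/40) - s)^11) + (3293581968570363985796875/683228546879526424 : ℝ) * ((s - (9/16))^1 * ((37/40) - s)^10) + (11609118236842601048609375/341614273439763212 : ℝ) * ((s - (9/16))^2 * ((37/40) - s)^9) + (24169229249542370338703125/170807136719881606 : ℝ) * ((s - (9/16))^3 * ((37/40) - s)^8) + (33034473280854940267156250/85403568359940803 : ℝ) * ((s - (9/16))^4 *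 ((37/40) - s)^7) + (8897999250290315598762500/12200509765705829 : ℝ) * ((s - (9/16))^5 * ((37/40) - s)^6) + (11816200091219057474125000/12200509765705829 : ℝ) * ((s - (9/16))^6 * ((37/40) - s)^5) + (77416286437164137881010000/85403568359940803 : ℝ) * ((s - (9/16))^7 * ((37/40) - s)^4) + (50082659724202300046690000/85403568359940803 : ℝ) * ((s - (9/16))^8 * ((37/40) - s)^3) + (64026674840799715503140000/256210705079822409 : ℝ) * ((s - (9/16))^9 * ((37/40) - s)^2) + (16185435296227873454440000/256210705079822409 : ℝ) * ((s - (9/16))^10 * ((37/40) - s)^1) + (613275948357606891600000/85403568359940803 : ℝ) * ((s - (9/16))^11 * ((37/40) - s)^0) := by ring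
    rw [e]
    have := T 0 11; have := T 1 10; have := T 2 9; have := T 3 8; have := T 4 7
    have := T 5 6; have := T 6 5; have := T 7 4; have := T 8 3; have := T 9 2
    have := T 10 1; have := T 11 0
    linarith

lemma star0 (s : ℝ) (hs0 : 0 ≤ s) :
    (2236068/1000000 : ℝ) * (90484/100000) / 6 + 43274331/100000000
      ≤ (∫ w in (0:ℝ)..s, Real.exp (-w ^ 2 / 2))
        + Real.exp (12 * s ^ 2) * ∫ v in Set.Ioi (5 * s), Real.exp (-v ^ 2 / 2) := by
  have hnum : (2236068/1000000 : ℝ) * (90484/100000) / 6 ≤ 76996/100000 - 43274331/100000000 := by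
    norm_num
  have hTnn : (0:ℝ) ≤ ∫ v in Set.Ioi (5 * s), Real.exp (-v ^ 2 / 2) :=
    setIntegral_nonneg measurableSet_Ioi (fun v _ => (Real.exp_pos _).le)
  have hII : ∀ u v : ℝ, IntervalIntegrable (fun w : ℝ => Real.exp (-w ^ 2 / 2)) volume u v :=
    fun u v => gauss_integrable.intervalIntegrable
  rcases le_or_gt s (37/40) with hcase | hcase
  · -- s ≤ 37/40 : use tail bounds
    have hJs : (s - s ^ 3 / 6 + s ^ 5 / 40 - s ^ 7 / 336)
        ≤ ∫ w in (0:ℝ)..s, Real.exp (-w ^ 2 / 2) := by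
      have h := J_poly_lb 0 s le_rfl hs0 (by linarith)
      norm_num at h
      linarith
    have hs2 : s ^ 2 ≤ 1 := by nlinarith
    have hyP : 1 - s ^ 2 / 2 + s ^ 4 / 8 - s ^ 6 / 48 ≤ Real.exp (-(s ^ 2 / 2)) := by
      have h := (exp_neg_series (s ^ 2 / 2) (by positivity) (by nlinarith)).1
      calc 1 - s ^ 2 / 2 + s ^ 4 / 8 - s ^ 6 / 48
          = 1 - s ^ 2 / 2 + (s ^ 2 / 2) ^ 2 / 2 - (s ^ 2 / 2) ^ 3 / 6 := by ring
        _ ≤ Real.exp (-(s ^ 2 / 2)) := h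
    have hs64 : s ^ 6 ≤ s ^ 4 := by nlinarith [pow_nonneg hs0 4, pow_nonneg hs0 6]
    have hPnn : (0:ℝ) ≤ 1 - s ^ 2 / 2 + s ^ 4 / 8 - s ^ 6 / 48 := by
      nlinarith [pow_nonneg hs0 4]
    have hprod : Real.exp (12 * s ^ 2) * Real.exp (-(5 * s) ^ 2 / 2)
        = Real.exp (-(s ^ 2 / 2)) := by
      rw [← Real.exp_add]; congr 1; ring
    rcases le_or_gt s (1/5) with hc1 | hc1
    · -- use M1
      have hq1 : (0:ℝ) < 25 * s ^ 2 + 20 * s + 8 := by positivity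
      have hM1nn : (0:ℝ) ≤ 8 / (25 * s ^ 2 + 20 * s + 8) := by positivity
      have htail := tail_lb1 (5 * s) (by positivity)
      have hden : (5 * s) ^ 2 + 4 * (5 * s) + 8 = 25 * s ^ 2 + 20 * s + 8 := by ring
      rw [hden] at htail
      have h1 : Real.exp (-(s ^ 2 / 2)) * (8 / (25 * s ^ 2 + 20 * s + 8))
          ≤ Real.exp (12 * s ^ 2) * ∫ v in Set.Ioi (5 * s), Real.exp (-v ^ 2 / 2) := by
        calc Real.exp (-(s ^ 2 / 2)) * (8 / (25 * s ^ 2 + 20 * s + 8))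
            = Real.exp (12 * s ^ 2)
                * (Real.exp (-(5 * s) ^ 2 / 2) * (8 / (25 * s ^ 2 + 20 * s + 8))) := by
              rw [← hprod]; ring
          _ ≤ Real.exp (12 * s ^ 2) * ∫ v in Set.Ioi (5 * s), Real.exp (-v ^ 2 / 2) :=
              mul_le_mul_of_nonneg_left htail (Real.exp_pos _).le
      have h2 : (1 - s ^ 2 / 2 + s ^ 4 / 8 - s ^ 6 / 48) * (8 / (25 * s ^ 2 + 20 * s + 8))
          ≤ Real.exp (-(s ^ 2 / 2)) * (8 / (25 * s ^ 2 + 20 * s + 8)) :=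
        mul_le_mul_of_nonneg_right hyP hM1nn
      have hcA := claimA s hs0 hc1
      have hdiv : (76996/100000 : ℝ) ≤ (s - s ^ 3 / 6 + s ^ 5 / 40 - s ^ 7 / 336)
          + (1 - s ^ 2 / 2 + s ^ 4 / 8 - s ^ 6 / 48) * (8 / (25 * s ^ 2 + 20 * s + 8)) := by
        rw [mul_div_assoc', ← sub_le_iff_le_add', le_div_iff₀ hq1]
        nlinarith [hcA]
      linarith [hJs, h1, h2, hdiv, hnum]
    · -- use M2
      have hq2 : (0:ℝ) < 625 * s ^ 4 + 150 * s ^ 2 + 3 := by positivity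
      have hM2nn : (0:ℝ) ≤ (125 * s ^ 3 + 25 * s) / (625 * s ^ 4 + 150 * s ^ 2 + 3) := by positivity
      have htail := tail_lb2 (5 * s) (by positivity)
      have hden : ((5 * s) ^ 3 + 5 * (5 * s)) / ((5 * s) ^ 4 + 6 * (5 * s) ^ 2 + 3)
          = (125 * s ^ 3 + 25 * s) / (625 * s ^ 4 + 150 * s ^ 2 + 3) := by
        congr 1 <;> ring
      rw [hden] at htail
      have h1 : Real.exp (-(s ^ 2 / 2)) * ((125 * s ^ 3 + 25 * s) / (625 * s ^ 4 + 150 * s ^ 2 + 3))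
          ≤ Real.exp (12 * s ^ 2) * ∫ v in Set.Ioi (5 * s), Real.exp (-v ^ 2 / 2) := by
        calc Real.exp (-(s ^ 2 / 2)) * ((125 * s ^ 3 + 25 * s) / (625 * s ^ 4 + 150 * s ^ 2 + 3))
            = Real.exp (12 * s ^ 2) * (Real.exp (-(5 * s) ^ 2 / 2)
                * ((125 * s ^ 3 + 25 * s) / (625 * s ^ 4 + 150 * s ^ 2 + 3))) := by
              rw [← hprod]; ring
          _ ≤ Real.exp (12 * s ^ 2) * ∫ v in Set.Ioi (5 * s), Real.exp (-v ^ 2 / 2) :=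
              mul_le_mul_of_nonneg_left htail (Real.exp_pos _).le
      have h2 : (1 - s ^ 2 / 2 + s ^ 4 / 8 - s ^ 6 / 48)
            * ((125 * s ^ 3 + 25 * s) / (625 * s ^ 4 + 150 * s ^ 2 + 3))
          ≤ Real.exp (-(s ^ 2 / 2)) * ((125 * s ^ 3 + 25 * s) / (625 * s ^ 4 + 150 * s ^ 2 + 3)) :=
        mul_le_mul_of_nonneg_right hyP hM2nn
      have hcB := claimB s hc1.le hcase
      have hdiv : (76996/100000 : ℝ) ≤ (s - s ^ 3 / 6 + s ^ 5 / 40 - s ^ 7 / 336)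
          + (1 - s ^ 2 / 2 + s ^ 4 / 8 - s ^ 6 / 48)
            * ((125 * s ^ 3 + 25 * s) / (625 * s ^ 4 + 150 * s ^ 2 + 3)) := by
        rw [mul_div_assoc', ← sub_le_iff_le_add', le_div_iff₀ hq2]
        nlinarith [hcB]
      linarith [hJs, h1, h2, hdiv, hnum]
  · -- s > 37/40
    have hJ1 : (76996/100000:ℝ) ≤ ∫ w in (0:ℝ)..(37/40), Real.exp (-w ^ 2 / 2) := by
      have h := J_poly_lb 0 (37/40) le_rfl (by norm_num) (by norm_num)
      norm_num at h ⊢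
      linarith
    have hJ2 : (0:ℝ) ≤ ∫ w in (37/40:ℝ)..s, Real.exp (-w ^ 2 / 2) :=
      intervalIntegral.integral_nonneg hcase.le (fun w _ => (Real.exp_pos _).le)
    have hsplit2 := intervalIntegral.integral_add_adjacent_intervals
      (hII 0 (37/40)) (hII (37/40) s)
    have hXnn : (0:ℝ) ≤ Real.exp (12 * s ^ 2) * ∫ v in Set.Ioi (5 * s), Real.exp (-v ^ 2 / 2) :=
      mul_nonneg (Real.exp_pos _).le hTnn
    linarith [hJ1, hJ2, hnum, hXnn, hsplit2]

theorem stmt_0 (x : ℝ) (hx : 0 ≤ x) :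
    stdNormalCDF (x / 2) + Real.exp (3 * x ^ 2) * (1 - stdNormalCDF (5 * x / 2)) ≥
      stdNormalCDF (1 / Real.sqrt 5)
        + (1 / 12) * Real.sqrt (10 / Real.pi) * Real.exp (-1 / 10) := by
  have hpi : (0:ℝ) < π := Real.pi_pos
  have hG : (0:ℝ) < Real.sqrt (2 * π) := Real.sqrt_pos.2 (by positivity)
  have h5 : Real.sqrt 5 ^ 2 = 5 := Real.sq_sqrt (by norm_num)
  have h5nn : (0:ℝ) ≤ Real.sqrt 5 := Real.sqrt_nonneg 5
  have h5l : (2:ℝ) ≤ Real.sqrt 5 := by nlinarith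
  have h5u : Real.sqrt 5 ≤ 2236068/1000000 := by nlinarith
  have h5pos : (0:ℝ) < Real.sqrt 5 := by linarith
  have ha0 : 0 < 1 / Real.sqrt 5 := by positivity
  have ha2 : (1 / Real.sqrt 5) ^ 2 = 1/5 := by rw [div_pow, h5]; norm_num
  have hau : 1 / Real.sqrt 5 ≤ 2236068/5000000 := by
    rw [div_le_iff₀ h5pos]
    nlinarith
  have ha45 : 1 / Real.sqrt 5 ≤ 7/5 := by nlinarith
  have hexp10 : Real.exp (-1/10) ≤ 90484/100000 := by
    have h := (exp_neg_series (1/10) (by norm_num) (by norm_num)).2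
    rw [show (-1/10 : ℝ) = -(1/10) by norm_num]
    linarith [h]
  have hK : Real.sqrt 5 / 6 * Real.exp (-1/10) ≤ 2236068/1000000 * (90484/100000) / 6 := by
    have h1 : Real.sqrt 5 / 6 * Real.exp (-1/10) ≤ Real.sqrt 5 / 6 * (90484/100000) :=
      mul_le_mul_of_nonneg_left hexp10 (by positivity)
    have h2 : Real.sqrt 5 / 6 * (90484/100000 : ℝ) ≤ 2236068/1000000 * (90484/100000) / 6 := by
      nlinarith
    linarith
  have hJa : ∫ w in (0:ℝ)..(1 / Real.sqrt 5), Real.exp (-w ^ 2 / 2) ≤ 43274331/100000000 := by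
    have h := J_poly_ub (1 / Real.sqrt 5) ha0.le ha45
    set b : ℝ := 1 / Real.sqrt 5 with hb
    have hb2 : b ^ 2 = 1/5 := ha2
    have hb3 : b ^ 3 = b * (1/5) := by rw [pow_succ, ← hb2]; ring
    have hb5 : b ^ 5 = b * (1/25) := by
      rw [show (5:ℕ) = 2 + 3 from rfl, pow_add, hb2, hb3]; ring
    have hb7 : b ^ 7 = b * (1/125) := by
      rw [show (7:ℕ) = 2 + 5 from rfl, pow_add, hb2, hb5]; ring
    have hb9 : b ^ 9 = b * (1/625) := by
      rw [show (9:ℕ) = 2 + 7 from rfl, pow_add, hb2, hb7]; ring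
    rw [hb3, hb5, hb7, hb9] at h
    have heq : b - b * (1/5) / 6 + b * (1/25) / 40 - b * (1/125) / 336
        + 5 * (b * (1/625)) / 13824 = b * (2340923/2419200) := by ring
    rw [heq] at h
    nlinarith
  have hII : ∀ u v : ℝ, IntervalIntegrable (fun w : ℝ => Real.exp (-w ^ 2 / 2)) volume u v :=
    fun u v => gauss_integrable.intervalIntegrable
  have hsplit : (∫ w in (1 / Real.sqrt 5)..(x/2), Real.exp (-w ^ 2 / 2))
      = (∫ w in (0:ℝ)..(x/2), Real.exp (-w ^ 2 / 2))
        - ∫ w in (0:ℝ)..(1 / Real.sqrt 5), Real.exp (-w ^ 2 / 2) := by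
    have h := intervalIntegral.integral_add_adjacent_intervals
      (hII 0 (1 / Real.sqrt 5)) (hII (1 / Real.sqrt 5) (x/2))
    linarith
  have hstar0 := star0 (x/2) (by positivity)
  rw [show (12:ℝ) * (x/2) ^ 2 = 3 * x ^ 2 by ring, show (5:ℝ) * (x/2) = 5 * x / 2 by ring]
    at hstar0
  have hstar : Real.sqrt 5 / 6 * Real.exp (-1/10)
      ≤ (∫ w in (1 / Real.sqrt 5)..(x/2), Real.exp (-w ^ 2 / 2))
        + Real.exp (3 * x ^ 2) * ∫ v in Set.Ioi (5 * x / 2), Real.exp (-v ^ 2 / 2) := by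
    rw [hsplit]
    linarith [hstar0, hJa, hK]
  have h1 := cdf_diff (1 / Real.sqrt 5) (x/2)
  have h2 := cdf_tail (5 * x / 2)
  have hsqrt20 : Real.sqrt (2 * π) * Real.sqrt (10 / π) = 2 * Real.sqrt 5 := by
    rw [← Real.sqrt_mul (by positivity)]
    rw [show 2 * π * (10 / π) = 20 by field_simp; ring]
    rw [show (20:ℝ) = 2 ^ 2 * 5 by norm_num, Real.sqrt_mul (by positivity),
      Real.sqrt_sq (by norm_num)]
  have hconst : (1/12) * Real.sqrt (10 / π) * Real.exp (-1/10)
      = (Real.sqrt (2 * π))⁻¹ * (Real.sqrt 5 / 6 * Real.exp (-1/10)) := by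
    have h10 : Real.sqrt (10 / π) = (Real.sqrt (2 * π))⁻¹ * (2 * Real.sqrt 5) := by
      rw [inv_mul_eq_div, eq_div_iff hG.ne', mul_comm]
      exact hsqrt20
    rw [h10]; ring
  have hfin : (Real.sqrt (2 * π))⁻¹ * (Real.sqrt 5 / 6 * Real.exp (-1/10))
      ≤ (stdNormalCDF (x/2) - stdNormalCDF (1 / Real.sqrt 5))
        + Real.exp (3 * x ^ 2) * (1 - stdNormalCDF (5 * x / 2)) := by
    rw [h1, h2]
    have h3 : Real.exp (3 * x ^ 2) * ((Real.sqrt (2 * π))⁻¹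
          * ∫ v in Set.Ioi (5 * x / 2), Real.exp (-v ^ 2 / 2))
        = (Real.sqrt (2 * π))⁻¹
          * (Real.exp (3 * x ^ 2) * ∫ v in Set.Ioi (5 * x / 2), Real.exp (-v ^ 2 / 2)) := by
      ring
    rw [h3, ← mul_add]
    exact mul_le_mul_of_nonneg_left hstar (by positivity)
  rw [ge_iff_le, hconst]
  linarith [hfin]
end

section
/- For all x ≥ 1, f(x) ≥ N(1/2) + (1/√(2π))·((√41 - 5)/4)·e^{-1/8}, where f(x) = N(x/2) + e^{3x²}(1 - N(5x/2)). -/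
open Real MeasureTheory Set Filter Topology

lemma sqrt2pi_pos : 0 < Real.sqrt (2 * π) := Real.sqrt_pos.mpr (by positivity)

lemma hasDerivAt_cdf (t : ℝ) :
    HasDerivAt stdNormalCDF ((Real.sqrt (2 * π))⁻¹ * Real.exp (-t ^ 2 / 2)) t := by
  have key : stdNormalCDF = fun x =>
      (Real.sqrt (2 * π))⁻¹ * (∫ v in Iic (0:ℝ), Real.exp (-v ^ 2 / 2))
        + (Real.sqrt (2 * π))⁻¹ * ∫ v in (0:ℝ)..x, Real.exp (-v ^ 2 / 2) := by
    funext x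
    rw [← intervalIntegral.integral_Iic_sub_Iic gauss_integrable.integrableOn
      gauss_integrable.integrableOn]
    unfold stdNormalCDF
    ring
  have hcont : Continuous fun v : ℝ => Real.exp (-v ^ 2 / 2) := by continuity
  have h1 : HasDerivAt (fun u => ∫ v in (0:ℝ)..u, Real.exp (-v ^ 2 / 2))
      (Real.exp (-t ^ 2 / 2)) t :=
    intervalIntegral.integral_hasDerivAt_right gauss_integrable.intervalIntegrable
      hcont.stronglyMeasurable.stronglyMeasurableAtFilter hcont.continuousAt
  rw [key]
  exact (h1.const_mul ((Real.sqrt (2 * π))⁻¹)).const_add _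

lemma tail_eq (t : ℝ) :
    1 - stdNormalCDF t = (Real.sqrt (2 * π))⁻¹ * ∫ v in Ioi t, Real.exp (-v ^ 2 / 2) := by
  have hsum := intervalIntegral.integral_Iic_add_Ioi (μ := volume) (b := t)
    gauss_integrable.integrableOn gauss_integrable.integrableOn
  rw [gauss_total] at hsum
  unfold stdNormalCDF
  have hB : (∫ v in Ioi t, Real.exp (-v ^ 2 / 2)) =
      Real.sqrt (2 * π) - ∫ v in Iic t, Real.exp (-v ^ 2 / 2) := by linarith [hsum]
  rw [hB, mul_sub, inv_mul_cancel₀ sqrt2pi_pos.ne']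

lemma mills (t a : ℝ) (ht : 0 < t) (ha : 0 < a) (h1 : 1 ≤ a ^ 2 + a * t) :
    (Real.sqrt (2 * π))⁻¹ * (Real.exp (-t ^ 2 / 2) / (t + a)) ≤ 1 - stdNormalCDF t := by
  set H : ℝ → ℝ := fun v => -(Real.exp (-v ^ 2 / 2) / (v + a)) with hH
  set H' : ℝ → ℝ := fun v => Real.exp (-v ^ 2 / 2) * (v ^ 2 + a * v + 1) / (v + a) ^ 2 with hH'
  have hder : ∀ v ∈ Ici t, HasDerivAt H (H' v) v := by
    intro v hv
    simp only [mem_Ici] at hv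
    have hva : v + a ≠ 0 := by nlinarith
    have he : HasDerivAt (fun v : ℝ => Real.exp (-v ^ 2 / 2))
        (Real.exp (-v ^ 2 / 2) * (-v)) v := by
      have hin : HasDerivAt (fun v : ℝ => -v ^ 2 / 2) (-v) v := by
        have h0 := ((hasDerivAt_pow 2 v).neg).div_const 2
        refine h0.congr_deriv ?_
        simp
        ring
      simpa using hin.exp
    have hdiv := he.div ((hasDerivAt_id v).add_const a) hva
    have := hdiv.neg
    refine this.congr_deriv ?_
    simp only [hH', id]
    field_simp
    ring
  have hH'le : ∀ v ∈ Ioi t, H' v ≤ Real.exp (-v ^ 2 / 2) := by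
    intro v hv
    simp only [mem_Ioi] at hv
    have hva : (0:ℝ) < v + a := by linarith
    rw [hH', div_le_iff₀ (by positivity)]
    have hexp : (0:ℝ) < Real.exp (-v ^ 2 / 2) := Real.exp_pos _
    nlinarith [mul_pos ha (sub_pos.mpr hv)]
  have hH'nonneg : ∀ v ∈ Ioi t, 0 ≤ H' v := by
    intro v hv
    simp only [mem_Ioi] at hv
    have hva : (0:ℝ) < v + a := by linarith
    have hexp : (0:ℝ) < Real.exp (-v ^ 2 / 2) := Real.exp_pos _
    have hnum : (0:ℝ) < v ^ 2 + a * v + 1 := by nlinarith [mul_pos ha (ht.trans hv)]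
    exact div_nonneg (mul_pos hexp hnum).le (sq_nonneg _)
  have hmeas : Measurable H' := by
    have h1 : Measurable fun v : ℝ => Real.exp (-v ^ 2 / 2) := by fun_prop
    have h2 : Measurable fun v : ℝ => v ^ 2 + a * v + 1 := by fun_prop
    have h3 : Measurable fun v : ℝ => (v + a) ^ 2 := by fun_prop
    exact (h1.mul h2).div h3
  have hH'int : IntegrableOn H' (Ioi t) := by
    apply (gauss_integrable.restrict (s := Ioi t)).mono'
      hmeas.aestronglyMeasurable
    rw [ae_restrict_iff' measurableSet_Ioi]
    filter_upwards with v hv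
    rw [Real.norm_eq_abs, abs_of_nonneg (hH'nonneg v hv)]
    exact hH'le v hv
  have hHlim : Tendsto H atTop (𝓝 0) := by
    have h1 : Tendsto (fun v : ℝ => Real.exp (-v ^ 2 / 2)) atTop (𝓝 0) := by
      have hsq : Tendsto (fun v : ℝ => v ^ 2 / 2) atTop atTop :=
        (tendsto_pow_atTop two_ne_zero).atTop_div_const (by norm_num)
      have h3 : Tendsto (fun v : ℝ => -v ^ 2 / 2) atTop atBot := by
        have h2 := tendsto_neg_atTop_atBot.comp hsq
        simpa [Function.comp_def, neg_div] using h2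
      have h4 := Real.tendsto_exp_atBot.comp h3
      simpa [Function.comp_def] using h4
    have h2 : Tendsto (fun v : ℝ => v + a) atTop atTop :=
      tendsto_atTop_add_const_right _ a tendsto_id
    have := (h1.div_atTop h2).neg
    simpa [hH] using this
  have hint : ∫ v in Ioi t, H' v = 0 - H t :=
    integral_Ioi_of_hasDerivAt_of_tendsto' hder hH'int hHlim
  have hmono : ∫ v in Ioi t, H' v ≤ ∫ v in Ioi t, Real.exp (-v ^ 2 / 2) :=
    setIntegral_mono_on hH'int gauss_integrable.integrableOn measurableSet_Ioi hH'le
  rw [tail_eq]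
  have hHt : 0 - H t = Real.exp (-t ^ 2 / 2) / (t + a) := by simp [hH]
  rw [hHt] at hint
  have := hint ▸ hmono
  exact mul_le_mul_of_nonneg_left this (le_of_lt (inv_pos.mpr sqrt2pi_pos))


lemma F_hasDeriv (x : ℝ) :
    HasDerivAt (fun y => stdNormalCDF (y / 2) + Real.exp (3 * y ^ 2) * (1 - stdNormalCDF (5 * y / 2)))
      ((Real.sqrt (2 * π))⁻¹ * Real.exp (-(x / 2) ^ 2 / 2) * (1 / 2)
        + (Real.exp (3 * x ^ 2) * (6 * x) * (1 - stdNormalCDF (5 * x / 2))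
          + Real.exp (3 * x ^ 2) * (-((Real.sqrt (2 * π))⁻¹ * Real.exp (-(5 * x / 2) ^ 2 / 2) * (5 / 2))))) x := by
  have h1 : HasDerivAt (fun y : ℝ => stdNormalCDF (y / 2))
      ((Real.sqrt (2 * π))⁻¹ * Real.exp (-(x / 2) ^ 2 / 2) * (1 / 2)) x := by
    have h := HasDerivAt.comp (x := x) (hasDerivAt_cdf (x / 2)) ((hasDerivAt_id x).div_const 2)
    simpa [Function.comp_def] using h
  have h2 : HasDerivAt (fun y : ℝ => Real.exp (3 * y ^ 2)) (Real.exp (3 * x ^ 2) * (6 * x)) x := by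
    have hin : HasDerivAt (fun y : ℝ => 3 * y ^ 2) (6 * x) x := by
      have h0 := (hasDerivAt_pow 2 x).const_mul 3
      refine h0.congr_deriv ?_
      simp
      ring
    exact hin.exp
  have h3 : HasDerivAt (fun y : ℝ => 1 - stdNormalCDF (5 * y / 2))
      (-((Real.sqrt (2 * π))⁻¹ * Real.exp (-(5 * x / 2) ^ 2 / 2) * (5 / 2))) x := by
    have hin : HasDerivAt (fun y : ℝ => 5 * y / 2) (5 / 2) x := by
      have h0 := ((hasDerivAt_id x).const_mul 5).div_const 2
      simpa using h0
    have h := HasDerivAt.comp (x := x) (hasDerivAt_cdf (5 * x / 2)) hin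
    have h' : HasDerivAt (fun y : ℝ => stdNormalCDF (5 * y / 2))
        ((Real.sqrt (2 * π))⁻¹ * Real.exp (-(5 * x / 2) ^ 2 / 2) * (5 / 2)) x := by
      simpa [Function.comp_def] using h
    exact h'.const_sub 1
  exact h1.add (h2.mul h3)

lemma deriv_nonneg (x : ℝ) (hx : 1 ≤ x) :
    0 ≤ (Real.sqrt (2 * π))⁻¹ * Real.exp (-(x / 2) ^ 2 / 2) * (1 / 2)
        + (Real.exp (3 * x ^ 2) * (6 * x) * (1 - stdNormalCDF (5 * x / 2))
          + Real.exp (3 * x ^ 2) * (-((Real.sqrt (2 * π))⁻¹ * Real.exp (-(5 * x / 2) ^ 2 / 2) * (5 / 2)))) := by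
  set c : ℝ := (Real.sqrt (2 * π))⁻¹ with hc
  have hcpos : 0 < c := inv_pos.mpr sqrt2pi_pos
  have hx0 : (0:ℝ) < x := by linarith
  have hm := mills (5 * x / 2) (x / 2) (by linarith) (by linarith) (by nlinarith)
  rw [show 5 * x / 2 + x / 2 = 3 * x by ring] at hm
  set A : ℝ := Real.exp (-(x / 2) ^ 2 / 2) with hA
  set B : ℝ := Real.exp (-(5 * x / 2) ^ 2 / 2) with hB
  set E : ℝ := Real.exp (3 * x ^ 2) with hE
  have hApos : 0 < A := Real.exp_pos _
  have hBpos : 0 < B := Real.exp_pos _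
  have hEpos : 0 < E := Real.exp_pos _
  have hEB : E * B = A := by
    rw [hE, hB, hA, ← Real.exp_add]
    congr 1
    ring
  have hkey : E * (6 * x) * (c * (B / (3 * x))) = 2 * (c * A) := by
    rw [← hEB]
    field_simp
    ring
  have hstep : 2 * (c * A) ≤ E * (6 * x) * (1 - stdNormalCDF (5 * x / 2)) := by
    rw [← hkey]
    exact mul_le_mul_of_nonneg_left hm (by positivity)
  have h5 : E * (c * B * (5 / 2)) = 5 / 2 * (c * A) := by
    rw [← hEB]; ring
  nlinarith [hstep, h5, mul_pos hcpos hApos]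

theorem stmt_11 (x : ℝ) (hx : 1 ≤ x) :
    stdNormalCDF (x / 2) + Real.exp (3 * x ^ 2) * (1 - stdNormalCDF (5 * x / 2)) ≥
      stdNormalCDF (1 / 2)
        + (1 / Real.sqrt (2 * Real.pi)) * ((Real.sqrt 41 - 5) / 4) * Real.exp (-1 / 8) := by
  set F : ℝ → ℝ := fun y =>
    stdNormalCDF (y / 2) + Real.exp (3 * y ^ 2) * (1 - stdNormalCDF (5 * y / 2)) with hF
  have hmono : MonotoneOn F (Ici 1) := by
    apply monotoneOn_of_deriv_nonneg (convex_Ici 1)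
    · exact fun y _ => (F_hasDeriv y).differentiableAt.continuousAt.continuousWithinAt
    · exact fun y _ => (F_hasDeriv y).differentiableAt.differentiableWithinAt
    · intro y hy
      rw [(F_hasDeriv y).deriv]
      refine deriv_nonneg y ?_
      rw [interior_Ici] at hy
      exact le_of_lt hy
  have h1x : F 1 ≤ F x := hmono (mem_Ici.mpr le_rfl) (mem_Ici.mpr hx) hx
  set s : ℝ := Real.sqrt 41 with hsdef
  have hs : s ^ 2 = 41 := Real.sq_sqrt (by norm_num)
  have hsnn : 0 ≤ s := Real.sqrt_nonneg 41
  have hs5 : (5:ℝ) < s := by nlinarith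
  have hm1 := mills (5 / 2) ((s - 5) / 4) (by norm_num) (by linarith) (by nlinarith)
  rw [show (5:ℝ) / 2 + (s - 5) / 4 = (s + 5) / 4 by ring] at hm1
  have hdiv : Real.exp (-(5 / 2 : ℝ) ^ 2 / 2) / ((s + 5) / 4)
      = Real.exp (-25 / 8) * ((s - 5) / 4) := by
    rw [show (-(5 / 2 : ℝ) ^ 2 / 2) = -25 / 8 by norm_num, div_eq_iff (by positivity)]
    have h16 : (s - 5) / 4 * ((s + 5) / 4) = 1 := by nlinarith
    rw [mul_assoc, h16, mul_one]
  rw [hdiv] at hm1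
  have hF1 : stdNormalCDF (1 / 2)
      + (1 / Real.sqrt (2 * Real.pi)) * ((s - 5) / 4) * Real.exp (-1 / 8) ≤ F 1 := by
    have hexp : Real.exp (3 * (1:ℝ) ^ 2) * (Real.exp (-25 / 8) * ((s - 5) / 4))
        = Real.exp (-1 / 8) * ((s - 5) / 4) := by
      rw [show (3 * (1:ℝ) ^ 2) = 3 by norm_num, ← mul_assoc, ← Real.exp_add]
      norm_num
    have hmul := mul_le_mul_of_nonneg_left hm1 (le_of_lt (Real.exp_pos (3 * (1:ℝ) ^ 2)))
    have heq : Real.exp (3 * (1:ℝ) ^ 2)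
          * ((Real.sqrt (2 * π))⁻¹ * (Real.exp (-25 / 8) * ((s - 5) / 4)))
        = (Real.sqrt (2 * π))⁻¹ * (Real.exp (-1 / 8) * ((s - 5) / 4)) := by
      have hee : Real.exp (-25 / 8 : ℝ) * Real.exp (3 * (1:ℝ) ^ 2) = Real.exp (-1 / 8) := by
        rw [← Real.exp_add]; norm_num
      calc Real.exp (3 * (1:ℝ) ^ 2)
            * ((Real.sqrt (2 * π))⁻¹ * (Real.exp (-25 / 8) * ((s - 5) / 4)))
          = (Real.sqrt (2 * π))⁻¹
            * ((Real.exp (-25 / 8) * Real.exp (3 * (1:ℝ) ^ 2)) * ((s - 5) / 4)) := by ring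
        _ = (Real.sqrt (2 * π))⁻¹ * (Real.exp (-1 / 8) * ((s - 5) / 4)) := by rw [hee]
    rw [heq] at hmul
    simp only [hF]
    rw [show (5 * (1:ℝ) / 2) = 5 / 2 by norm_num]
    have hre : (1 / Real.sqrt (2 * Real.pi)) * ((s - 5) / 4) * Real.exp (-1 / 8)
        = (Real.sqrt (2 * π))⁻¹ * (Real.exp (-1 / 8) * ((s - 5) / 4)) := by
      rw [one_div]; ring
    rw [hre]
    linarith [hmul]
  have hFx : F x = stdNormalCDF (x / 2) + Real.exp (3 * x ^ 2) * (1 - stdNormalCDF (5 * x / 2)) := rfl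
  rw [ge_iff_le, ← hFx]
  calc stdNormalCDF (1 / 2) + (1 / Real.sqrt (2 * Real.pi)) * ((s - 5) / 4) * Real.exp (-1 / 8)
      ≤ F 1 := hF1
    _ ≤ F x := h1x
end
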